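/- In the setting of the doubled space: given bounded measurable f⁻, f⁺ on M with f⁻ = f⁺ on A, define f on M̃ by f = f^± ∘ π on M^±, and set f̄ = (f⁻+f⁺)/2, f^D = (f⁺−f⁻)/2. Define u_t(x) = ∫ p̃(t,x,y) f(y) dν̃(y), ū_t(x) = ∫ p(t,x,y) f̄(y) dν(y), u_t^D(x) = ∫ p_D(t,x,y) f^D(y) dν(y) (with u^D extended by 0 on A). Then u_t = (ū_t ± u_t^D) ∘ π on M^±, where ν̃ assigns full mass on A and half mass on each copy of D. -/
import Mathlib


open MeasureTheory

/-- The kernel on the doubled space `M̃` (two copies of `M` glued along `A`,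
modelled as `M × Bool`). -/
noncomputable def ptilde {M : Type*} (A : Set M) (p pD : ℝ → M → M → ℝ) :
    ℝ → M × Bool → M × Bool → ℝ := fun t x y =>
  open Classical in
  if x.1 ∈ A ∨ y.1 ∈ A then p t x.1 y.1
  else if x.2 = y.2 then p t x.1 y.1 + pD t x.1 y.1
  else p t x.1 y.1 - pD t x.1 y.1

/-- On the doubled space: with `f = f^± ∘ π` on `M^±`, `f̄ = (f⁻+f⁺)/2`,
`f^D = (f⁺−f⁻)/2`, `u_t(x) = ∫ p̃(t,x,y) f(y) dν̃(y)` (where `ν̃` puts full mass on `A`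
and half mass on each copy of `D`), `ū_t(x) = ∫ p(t,x,y) f̄(y) dν(y)` and
`u^D_t(x) = ∫ p_D(t,x,y) f^D(y) dν(y)` (which vanishes on `A` since `p_D` is Dirichlet),
one has `u_t = (ū_t ± u^D_t) ∘ π` on `M^±`. -/
theorem stmt12 {M : Type*} [MeasurableSpace M] (ν : Measure M) (A : Set M)
    (p pD : ℝ → M → M → ℝ) (fm fp : M → ℝ)
    (hagree : ∀ z ∈ A, fm z = fp z)
    (hDirichlet : ∀ (t : ℝ) (x y : M), x ∈ A ∨ y ∈ A → pD t x y = 0)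
    (hint : ∀ (t : ℝ) (x : M),
      Integrable (fun y => p t x y * fm y) ν ∧ Integrable (fun y => p t x y * fp y) ν ∧
      Integrable (fun y => pD t x y * fm y) ν ∧ Integrable (fun y => pD t x y * fp y) ν)
    (f : M × Bool → ℝ) (hf : ∀ z : M × Bool, f z = if z.2 then fp z.1 else fm z.1)
    (u : ℝ → M × Bool → ℝ)
    (hu : ∀ (t : ℝ) (x : M × Bool), u t x =
      (1 / 2) * ∫ y, ptilde A p pD t x (y, false) * f (y, false) ∂ν
        + (1 / 2) * ∫ y, ptilde A p pD t x (y, true) * f (y, true) ∂ν)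
    (ubar : ℝ → M → ℝ)
    (hubar : ∀ t x, ubar t x = ∫ y, p t x y * ((fm y + fp y) / 2) ∂ν)
    (uD : ℝ → M → ℝ)
    (huD : ∀ t x, uD t x = ∫ y, pD t x y * ((fp y - fm y) / 2) ∂ν) :
    ∀ (t : ℝ) (x : M × Bool),
      u t x = ubar t x.1 + (if x.2 then uD t x.1 else -uD t x.1) := by
  intro t x
  obtain ⟨h1, h2, h3, h4⟩ := hint t x.1
  set s1 : ℝ := if x.2 then -1 else 1 with hs1
  set s2 : ℝ := if x.2 then 1 else -1 with hs2
  have eq1 : (fun y => ptilde A p pD t x (y, false) * f (y, false))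
      = fun y => p t x.1 y * fm y + s1 * (pD t x.1 y * fm y) := by
    funext y
    simp only [ptilde, hf]
    by_cases hx : x.1 ∈ A
    · simp [hx, hDirichlet t x.1 y (Or.inl hx)]
    · by_cases hy : y ∈ A
      · simp [hx, hy, hDirichlet t x.1 y (Or.inr hy)]
      · cases hxb : x.2 <;> simp [hx, hy, hxb, hs1] <;> ring
  have eq2 : (fun y => ptilde A p pD t x (y, true) * f (y, true))
      = fun y => p t x.1 y * fp y + s2 * (pD t x.1 y * fp y) := by
    funext y
    simp only [ptilde, hf]
    by_cases hx : x.1 ∈ A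
    · simp [hx, hDirichlet t x.1 y (Or.inl hx)]
    · by_cases hy : y ∈ A
      · simp [hx, hy, hDirichlet t x.1 y (Or.inr hy)]
      · cases hxb : x.2 <;> simp [hx, hy, hxb, hs2] <;> ring
  have i1 : (∫ y, ptilde A p pD t x (y, false) * f (y, false) ∂ν)
      = (∫ y, p t x.1 y * fm y ∂ν) + s1 * ∫ y, pD t x.1 y * fm y ∂ν := by
    rw [eq1, integral_add h1 (h3.const_mul s1), integral_const_mul]
  have i2 : (∫ y, ptilde A p pD t x (y, true) * f (y, true) ∂ν)
      = (∫ y, p t x.1 y * fp y ∂ν) + s2 * ∫ y, pD t x.1 y * fp y ∂ν := by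
    rw [eq2, integral_add h2 (h4.const_mul s2), integral_const_mul]
  have ib : ubar t x.1 = (1/2) * (∫ y, p t x.1 y * fm y ∂ν)
      + (1/2) * ∫ y, p t x.1 y * fp y ∂ν := by
    rw [hubar]
    have : (fun y => p t x.1 y * ((fm y + fp y) / 2))
        = fun y => (1/2) * (p t x.1 y * fm y) + (1/2) * (p t x.1 y * fp y) := by
      funext y; ring
    rw [this, integral_add (h1.const_mul _) (h2.const_mul _),
      integral_const_mul, integral_const_mul]
  have id : uD t x.1 = (1/2) * (∫ y, pD t x.1 y * fp y ∂ν)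
      - (1/2) * ∫ y, pD t x.1 y * fm y ∂ν := by
    rw [huD]
    have : (fun y => pD t x.1 y * ((fp y - fm y) / 2))
        = fun y => (1/2) * (pD t x.1 y * fp y) - (1/2) * (pD t x.1 y * fm y) := by
      funext y; ring
    rw [this, integral_sub (h4.const_mul _) (h3.const_mul _),
      integral_const_mul, integral_const_mul]
  rw [hu, i1, i2, ib, id]
  cases hxb : x.2 <;> rw [hs1, hs2] <;> simp only [hxb] <;> norm_num <;> ring
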